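/- For every signed permutation π ∈ B_n with π_n < 0, the sum of the descent positions of π whose sign type is +- (i.e., descents i with π_i > 0 > π_{i+1}) plus neg(π) equals the sum of the ascent positions of π (indices i ∈ [n-1] with π_i < π_{i+1}) whose sign type is -+ (i.e., π_i < 0 < π_{i+1}) plus n. -/
import Mathlib


open Finset

/-- `f : ℕ → ℤ` represents a signed permutation of `{1,...,n}` via its values
`f 1, ..., f n ∈ {±1,...,±n}` (the absolute values forming a permutation of `{1,...,n}`),
with `f i = 0` for `i = 0` and `i > n`. -/
def IsSignedPerm (n : ℕ) (f : ℕ → ℤ) : Prop :=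
  (∀ i, 1 ≤ i → i ≤ n → 1 ≤ |f i| ∧ |f i| ≤ n) ∧
  (∀ i j, 1 ≤ i → i ≤ n → 1 ≤ j → j ≤ n → |f i| = |f j| → i = j) ∧
  (∀ i, i = 0 ∨ n < i → f i = 0)

/-- `neg(f)`, the number of negative entries. -/
def negCount (n : ℕ) (f : ℕ → ℤ) : ℕ :=
  ((Finset.Icc 1 n).filter fun i => f i < 0).card

lemma telescope (χ : ℕ → ℤ) (n : ℕ) :
    ∑ i ∈ Finset.Icc 1 n, (i : ℤ) * (χ i - χ (i + 1)) =
      (∑ i ∈ Finset.Icc 1 n, χ i) - n * χ (n + 1) := by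
  induction n with
  | zero => simp
  | succ m ih =>
    rw [Finset.sum_Icc_succ_top (by omega), Finset.sum_Icc_succ_top (by omega), ih]
    push_cast
    ring

theorem stmt6 (n : ℕ) (f : ℕ → ℤ) (hf : IsSignedPerm n f) (hn : f n < 0) :
    (∑ i ∈ (Finset.Icc 1 (n - 1)).filter fun i => 0 < f i ∧ f (i + 1) < 0, i)
        + negCount n f =
      (∑ i ∈ (Finset.Icc 1 (n - 1)).filter fun i => f i < 0 ∧ 0 < f (i + 1), i) + n := by
  obtain ⟨hbound, hinj, hzero⟩ := hf
  have hn1 : 1 ≤ n := by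
    by_contra h
    have := hzero n (by omega)
    omega
  set χ : ℕ → ℤ := fun i => if f i < 0 then 1 else 0 with hχ
  have hχn1 : χ (n + 1) = 0 := by
    have := hzero (n + 1) (by omega)
    simp [hχ, this]
  -- negCount as a sum
  have hneg : (negCount n f : ℤ) = ∑ i ∈ Finset.Icc 1 n, χ i := by
    rw [negCount]
    rw [Finset.card_filter]
    push_cast
    rfl
  have htel := telescope χ n
  rw [hχn1] at htel
  -- split off the top term
  obtain ⟨m, rfl⟩ : ∃ m, n = m + 1 := ⟨n - 1, by omega⟩
  rw [Finset.sum_Icc_succ_top (by omega)] at htel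
  have htop : ((m + 1 : ℕ) : ℤ) * (χ (m + 1) - χ (m + 1 + 1)) = (m + 1 : ℕ) := by
    rw [hχn1]
    simp [hχ, hn]
  rw [htop] at htel
  -- pointwise analysis on Icc 1 m
  have hpt : ∀ i ∈ Finset.Icc 1 m, (i : ℤ) * (χ i - χ (i + 1)) =
      (if f i < 0 ∧ 0 < f (i + 1) then (i : ℤ) else 0) -
      (if 0 < f i ∧ f (i + 1) < 0 then (i : ℤ) else 0) := by
    intro i hi
    simp only [Finset.mem_Icc] at hi
    have h1 : 1 ≤ |f i| := (hbound i hi.1 (by omega)).1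
    have h2 : 1 ≤ |f (i + 1)| := (hbound (i + 1) (by omega) (by omega)).1
    have hfi : f i ≠ 0 := by intro h; rw [h] at h1; simp at h1
    have hfi1 : f (i + 1) ≠ 0 := by intro h; rw [h] at h2; simp at h2
    simp only [hχ]
    split_ifs <;> norm_num <;> omega
  rw [Finset.sum_congr rfl hpt, Finset.sum_sub_distrib] at htel
  -- convert filtered nat sums
  have hA : ((∑ i ∈ (Finset.Icc 1 (m + 1 - 1)).filter fun i => f i < 0 ∧ 0 < f (i + 1), i : ℕ) : ℤ) =
      ∑ i ∈ Finset.Icc 1 m, (if f i < 0 ∧ 0 < f (i + 1) then (i : ℤ) else 0) := by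
    rw [← Finset.sum_filter]
    push_cast
    simp
  have hD : ((∑ i ∈ (Finset.Icc 1 (m + 1 - 1)).filter fun i => 0 < f i ∧ f (i + 1) < 0, i : ℕ) : ℤ) =
      ∑ i ∈ Finset.Icc 1 m, (if 0 < f i ∧ f (i + 1) < 0 then (i : ℤ) else 0) := by
    rw [← Finset.sum_filter]
    push_cast
    simp
  have key : ((∑ i ∈ (Finset.Icc 1 (m + 1 - 1)).filter fun i => 0 < f i ∧ f (i + 1) < 0, i : ℕ) : ℤ)
      + (negCount (m + 1) f : ℤ) =
      ((∑ i ∈ (Finset.Icc 1 (m + 1 - 1)).filter fun i => f i < 0 ∧ 0 < f (i + 1), i : ℕ) : ℤ)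
      + (m + 1 : ℕ) := by
    rw [hA, hD, hneg]
    push_cast at htel ⊢
    linarith
  exact_mod_cast key
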